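/- arXiv:math/0610726 — 2 statements merged into one kernel-verified Lean document; each statement's English description precedes it below -/
import Mathlib

section
/- Let R be a commutative based ring and let S be a based subring of R. Then (S^co)_ad ⊆ S ⊆ (S_ad)^co. -/
/-- A *based ring* (fusion ring). -/
structure BasedRing (ι R : Type*) [Fintype ι] [DecidableEq ι] [Ring R] where
  b : Module.Basis ι ℤ R
  unit : ι
  b_unit : b unit = 1
  star : ι → ι
  star_invol : ∀ i, star (star i) = i
  c_nonneg : ∀ i j k, 0 ≤ b.repr (b i * b j) k
  adj_right : ∀ i j k, b.repr (b i * b j) k = b.repr (b k * b (star j)) i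
  adj_left : ∀ i j k, b.repr (b i * b j) k = b.repr (b (star i) * b k) j

namespace BasedRing

variable {ι R : Type*} [Fintype ι] [DecidableEq ι] [Ring R] (BR : BasedRing ι R)

/-- `x` (with nonnegative coordinates) *contains* the basic element `k`. -/
def contains (x : R) (k : ι) : Prop := 0 < BR.b.repr x k

/-- The `ℤ`-span of a (finite) set of basic elements. -/
def spanOf (C : Finset ι) : Submodule ℤ R := Submodule.span ℤ (BR.b '' (↑C : Set ι))

/-- `C` indexes a *based subring* of `R`: it contains the unit, is closed under
the involution, and every basic element contained in a product of two of its
elements again lies in it. -/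
def IsBasedSubring (C : Finset ι) : Prop :=
  BR.unit ∈ C ∧ (∀ i ∈ C, BR.star i ∈ C) ∧
    ∀ i ∈ C, ∀ j ∈ C, ∀ k, BR.contains (BR.b i * BR.b j) k → k ∈ C

open Classical in
/-- The adjoint subring `S_ad` of the based subring `S` spanned by `C`: the
basic elements contained in some power (`n ≥ 1`) of `Σ_{X basic in S} X X*`. -/
noncomputable def adOf (C : Finset ι) : Finset ι :=
  Finset.univ.filter fun k => ∃ n : ℕ, 1 ≤ n ∧
    BR.contains ((∑ i ∈ C, BR.b i * BR.b (BR.star i)) ^ n) k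

open Classical in
/-- The commutator `S^co` of the based subring `S` spanned by `C`: the basic
elements `Y` with `YY* ∈ S`. -/
noncomputable def coOf (C : Finset ι) : Finset ι :=
  Finset.univ.filter fun j => BR.b j * BR.b (BR.star j) ∈ BR.spanOf C

end BasedRing

/-! The first inclusion holds because `spanOf C` is closed under multiplication, so every power
of `∑ Y Y*` over `Y ∈ S^co` stays in `S`. The second holds because, all structure constants
being nonnegative, `X X*` cannot cancel inside `∑_{X ∈ S} X X*`. -/

namespace BasedRing

variable {ι R : Type*} [Fintype ι] [DecidableEq ι] [Ring R] (BR : BasedRing ι R)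

lemma mem_spanOf_iff (C : Finset ι) (x : R) :
    x ∈ BR.spanOf C ↔ ∀ k, BR.b.repr x k ≠ 0 → k ∈ C := by
  rw [spanOf, Module.Basis.mem_span_image]
  exact ⟨fun h k hk => h (Finsupp.mem_support_iff.mpr hk),
    fun h k hk => h k (Finsupp.mem_support_iff.mp hk)⟩

lemma mem_coOf {C : Finset ι} {j : ι} :
    j ∈ BR.coOf C ↔ BR.b j * BR.b (BR.star j) ∈ BR.spanOf C := by
  simp [coOf]

lemma mem_adOf {C : Finset ι} {k : ι} :
    k ∈ BR.adOf C ↔ ∃ n, 1 ≤ n ∧ BR.contains ((∑ i ∈ C, BR.b i * BR.b (BR.star i)) ^ n) k := by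
  simp [adOf]

lemma basis_mul_mem_spanOf {C : Finset ι} (hC : BR.IsBasedSubring C) {i j : ι}
    (hi : i ∈ C) (hj : j ∈ C) : BR.b i * BR.b j ∈ BR.spanOf C :=
  (BR.mem_spanOf_iff C _).mpr fun k hk =>
    hC.2.2 i hi j hj k ((BR.c_nonneg i j k).lt_of_ne' hk)

lemma mul_mem_spanOf {C : Finset ι} (hC : BR.IsBasedSubring C) {x y : R}
    (hx : x ∈ BR.spanOf C) (hy : y ∈ BR.spanOf C) : x * y ∈ BR.spanOf C := by
  have hle : BR.spanOf C * BR.spanOf C ≤ BR.spanOf C := by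
    rw [spanOf, Submodule.span_mul_span, Submodule.span_le]
    rintro _ ⟨_, ⟨i, hi, rfl⟩, _, ⟨j, hj, rfl⟩, rfl⟩
    exact BR.basis_mul_mem_spanOf hC hi hj
  exact hle (Submodule.mul_mem_mul hx hy)

lemma pow_mem_spanOf {C : Finset ι} (hC : BR.IsBasedSubring C) {x : R}
    (hx : x ∈ BR.spanOf C) {n : ℕ} (hn : 1 ≤ n) : x ^ n ∈ BR.spanOf C := by
  induction n, hn using Nat.le_induction with
  | base => rwa [pow_one]
  | succ m _ ih => rw [pow_succ]; exact BR.mul_mem_spanOf hC ih hx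

lemma adOf_subset {C D : Finset ι} (hC : BR.IsBasedSubring C)
    (hD : ∀ i ∈ D, BR.b i * BR.b (BR.star i) ∈ BR.spanOf C) : BR.adOf D ⊆ C := by
  intro k hk
  obtain ⟨n, hn, hpos⟩ := BR.mem_adOf.mp hk
  have hsum : ∑ i ∈ D, BR.b i * BR.b (BR.star i) ∈ BR.spanOf C :=
    Submodule.sum_mem _ hD
  exact (BR.mem_spanOf_iff C _).mp (BR.pow_mem_spanOf hC hsum hn) k hpos.ne'

lemma adOf_coOf_subset {C : Finset ι} (hC : BR.IsBasedSubring C) :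
    BR.adOf (BR.coOf C) ⊆ C :=
  BR.adOf_subset hC fun _ hi => BR.mem_coOf.mp hi

lemma subset_coOf_adOf (C : Finset ι) : C ⊆ BR.coOf (BR.adOf C) := by
  intro j hj
  refine BR.mem_coOf.mpr <| (BR.mem_spanOf_iff _ _).mpr fun k hk => ?_
  refine BR.mem_adOf.mpr ⟨1, le_rfl, ?_⟩
  rw [contains, pow_one, map_sum, Finsupp.coe_finsetSum, Finset.sum_apply]
  exact Finset.sum_pos' (fun i _ => BR.c_nonneg i (BR.star i) k)
    ⟨j, hj, (BR.c_nonneg j (BR.star j) k).lt_of_ne' hk⟩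

end BasedRing

theorem coad_le_le_adco_general {ι R : Type*} [Fintype ι] [DecidableEq ι] [Ring R]
    (BR : BasedRing ι R)
    (C : Finset ι) (hC : BR.IsBasedSubring C) :
    BR.adOf (BR.coOf C) ⊆ C ∧ C ⊆ BR.coOf (BR.adOf C) :=
  ⟨BR.adOf_coOf_subset hC, BR.subset_coOf_adOf C⟩

/-- Let `R` be a commutative based ring and `S` a based subring
(with basic elements indexed by `C`). Then `(S^co)_ad ⊆ S ⊆ (S_ad)^co`. -/
theorem coad_le_le_adco {ι R : Type*} [Fintype ι] [DecidableEq ι] [Ring R]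
    (BR : BasedRing ι R) (hcomm : ∀ x y : R, x * y = y * x)
    (C : Finset ι) (hC : BR.IsBasedSubring C) :
    BR.adOf (BR.coOf C) ⊆ C ∧ C ⊆ BR.coOf (BR.adOf C) :=
  coad_le_le_adco_general BR C hC
end

section
/- Let R be a commutative based ring, with upper central series R = R^(0) ⊇ R^(1) ⊇ ⋯ defined by R^(n) = (R^(n−1))_ad, and lower central series ℤ1 = R_(0) ⊆ R_(1) ⊆ ⋯ defined by R_(n) = (R_(n−1))^co. Then for every n ≥ 0: R^(n) = ℤ1 if and only if R_(n) = R; and when this is the case, R^(k) ⊆ R_(n−k) for all 0 ≤ k ≤ n. -/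
namespace BasedRing

variable {ι R : Type*} [Fintype ι] [DecidableEq ι] [Ring R] (BR : BasedRing ι R)

/-- The upper central series: `R^(0) = R`, `R^(n) = (R^(n-1))_ad`. -/
noncomputable def upper : ℕ → Finset ι
  | 0 => Finset.univ
  | n + 1 => BR.adOf (upper n)

/-- The lower central series: `R_(0) = ℤ1`, `R_(n) = (R_(n-1))^co`. -/
noncomputable def lower : ℕ → Finset ι
  | 0 => {BR.unit}
  | n + 1 => BR.coOf (lower n)

end BasedRing

/-!
`ad` and `co` form a Galois connection: if `T` spans a multiplicatively closed
subgroup, then `S_ad ⊆ T ↔ S ⊆ T^co`, since `S_ad` is generated by the `X X*` with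
`X ∈ S`. In a commutative based ring every `R_(n)` spans such a subring: if `Y, Y'` lie
in `T^co` and `Y Y'` contains `Z`, then by positivity of the structure constants
`Z Z*` is contained in `(Y Y')(Y Y')* = (Y Y*)(Y' Y'*)`, which lies in `T`.
Iterating the adjunction gives `R^(a+b) ⊆ ℤ1 ↔ R^(a) ⊆ R_(b)`; take `a = 0`,
resp. `a = k, b = n - k`.
-/

namespace BasedRing

variable {ι R : Type*} [Fintype ι] [DecidableEq ι] [Ring R] (BR : BasedRing ι R)

lemma repr_mul (x y : R) (l : ι) :
    BR.b.repr (x * y) l =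
      ∑ i, ∑ j, BR.b.repr x i * BR.b.repr y j * BR.b.repr (BR.b i * BR.b j) l := by
  conv_lhs => rw [← BR.b.sum_repr x, ← BR.b.sum_repr y]
  rw [Finset.sum_mul]
  simp only [Finset.mul_sum, smul_mul_assoc, mul_smul_comm, map_sum,
    Finsupp.finsetSum_apply, map_smul, Finsupp.smul_apply, smul_eq_mul]
  exact Finset.sum_congr rfl fun i _ => Finset.sum_congr rfl fun j _ => by ring

lemma contains_mul {x y : R} (hx : ∀ i, 0 ≤ BR.b.repr x i) (hy : ∀ j, 0 ≤ BR.b.repr y j)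
    {i j l : ι} (hi : BR.contains x i) (hj : BR.contains y j)
    (hl : BR.contains (BR.b i * BR.b j) l) : BR.contains (x * y) l := by
  have hterm : ∀ i' j', 0 ≤ BR.b.repr x i' * BR.b.repr y j' * BR.b.repr (BR.b i' * BR.b j') l :=
    fun i' j' => mul_nonneg (mul_nonneg (hx i') (hy j')) (BR.c_nonneg _ _ _)
  rw [contains, repr_mul]
  refine Finset.sum_pos' (fun i' _ => Finset.sum_nonneg fun j' _ => hterm i' j')
    ⟨i, Finset.mem_univ _, Finset.sum_pos' (fun j' _ => hterm i j') ⟨j, Finset.mem_univ _, ?_⟩⟩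
  exact mul_pos (mul_pos hi hj) hl

lemma mem_of_contains_of_mem_spanOf {C : Finset ι} {x : R} {k : ι}
    (hx : x ∈ BR.spanOf C) (hk : BR.contains x k) : k ∈ C :=
  (BR.b.mem_span_image.1 hx) (Finsupp.mem_support_iff.2 hk.ne')

lemma mem_spanOf_of_contains {C : Finset ι} {x : R} (hx : ∀ k, 0 ≤ BR.b.repr x k)
    (h : ∀ k, BR.contains x k → k ∈ C) : x ∈ BR.spanOf C :=
  BR.b.mem_span_image.2 fun k hk =>
    h k ((hx k).lt_of_ne (Finsupp.mem_support_iff.1 hk).symm)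

lemma spanOf_mul_le_of_mul_mem {C : Finset ι}
    (h : ∀ i ∈ C, ∀ j ∈ C, BR.b i * BR.b j ∈ BR.spanOf C) :
    BR.spanOf C * BR.spanOf C ≤ BR.spanOf C := by
  rw [spanOf, Submodule.span_mul_span, Submodule.span_le]
  rintro _ ⟨_, ⟨i, hi, rfl⟩, _, ⟨j, hj, rfl⟩, rfl⟩
  exact h i hi j hj

lemma repr_mul_star_unit (i : ι) : BR.b.repr (BR.b i * BR.b (BR.star i)) BR.unit = 1 := by
  rw [BR.adj_right, BR.star_invol, BR.b_unit, one_mul, Module.Basis.repr_self,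
    Finsupp.single_eq_same]

lemma repr_star_mul_star (i j k : ι) :
    BR.b.repr (BR.b (BR.star j) * BR.b (BR.star i)) (BR.star k) =
      BR.b.repr (BR.b i * BR.b j) k := by
  have h := BR.adj_right (BR.star j) (BR.star i) (BR.star k)
  rw [BR.star_invol] at h
  rw [BR.adj_right i j k, BR.adj_left k (BR.star j) i, h]

lemma contains_sum_mul_star {C : Finset ι} {i k : ι} (hi : i ∈ C)
    (hk : BR.contains (BR.b i * BR.b (BR.star i)) k) :
    BR.contains (∑ i ∈ C, BR.b i * BR.b (BR.star i)) k := by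
  rw [contains, map_sum, Finsupp.finsetSum_apply]
  exact Finset.sum_pos' (fun _ _ => BR.c_nonneg _ _ _) ⟨i, hi, hk⟩

lemma mem_adOf_of_contains {C : Finset ι} {i k : ι} (hi : i ∈ C)
    (hk : BR.contains (BR.b i * BR.b (BR.star i)) k) : k ∈ BR.adOf C := by
  classical
  rw [adOf, Finset.mem_filter]
  exact ⟨Finset.mem_univ _, 1, le_rfl, by rw [pow_one]; exact BR.contains_sum_mul_star hi hk⟩

lemma adOf_subset_iff_subset_coOf {C T : Finset ι}
    (hT : BR.spanOf T * BR.spanOf T ≤ BR.spanOf T) :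
    BR.adOf C ⊆ T ↔ C ⊆ BR.coOf T := by
  classical
  constructor
  · intro h i hi
    rw [coOf, Finset.mem_filter]
    exact ⟨Finset.mem_univ _, BR.mem_spanOf_of_contains (BR.c_nonneg _ _)
      fun k hk => h (BR.mem_adOf_of_contains hi hk)⟩
  · intro h k hk
    rw [adOf, Finset.mem_filter] at hk
    obtain ⟨-, n, hn, hcont⟩ := hk
    have hsum : ∑ i ∈ C, BR.b i * BR.b (BR.star i) ∈ BR.spanOf T :=
      Submodule.sum_mem _ fun i hi => (Finset.mem_filter.1 (h hi)).2
    have hpow : ∀ m, 1 ≤ m → (∑ i ∈ C, BR.b i * BR.b (BR.star i)) ^ m ∈ BR.spanOf T := by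
      intro m hm
      induction m, hm using Nat.le_induction with
      | base => rwa [pow_one]
      | succ m _ ih => rw [pow_succ]; exact hT (Submodule.mul_mem_mul ih hsum)
    exact BR.mem_of_contains_of_mem_spanOf (hpow n hn) hcont

lemma spanOf_coOf_mul_le (hcomm : ∀ x y : R, x * y = y * x) {T : Finset ι}
    (hT : BR.spanOf T * BR.spanOf T ≤ BR.spanOf T) :
    BR.spanOf (BR.coOf T) * BR.spanOf (BR.coOf T) ≤ BR.spanOf (BR.coOf T) := by
  classical
  refine BR.spanOf_mul_le_of_mul_mem fun j hj j' hj' => ?_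
  rw [coOf, Finset.mem_filter] at hj hj'
  have hprod : BR.b j * BR.b j' * (BR.b (BR.star j') * BR.b (BR.star j)) ∈ BR.spanOf T := by
    have := hT (Submodule.mul_mem_mul hj.2 hj'.2)
    rwa [mul_assoc, hcomm (BR.b (BR.star j)), mul_assoc, ← mul_assoc (BR.b j)] at this
  refine BR.mem_spanOf_of_contains (BR.c_nonneg _ _) fun k hk => ?_
  rw [coOf, Finset.mem_filter]
  refine ⟨Finset.mem_univ _, BR.mem_spanOf_of_contains (BR.c_nonneg _ _) fun l hl => ?_⟩
  have hk' : BR.contains (BR.b (BR.star j') * BR.b (BR.star j)) (BR.star k) := by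
    rwa [contains, BR.repr_star_mul_star]
  exact BR.mem_of_contains_of_mem_spanOf hprod
    (BR.contains_mul (BR.c_nonneg _ _) (BR.c_nonneg _ _) hk hk' hl)

lemma spanOf_lower_mul_le (hcomm : ∀ x y : R, x * y = y * x) (n : ℕ) :
    BR.spanOf (BR.lower n) * BR.spanOf (BR.lower n) ≤ BR.spanOf (BR.lower n) := by
  induction n with
  | zero =>
    refine BR.spanOf_mul_le_of_mul_mem fun i hi j hj => ?_
    rw [lower, Finset.mem_singleton] at hi hj
    subst hi hj
    rw [BR.b_unit, one_mul, ← BR.b_unit]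
    exact Submodule.subset_span ⟨BR.unit, Finset.mem_singleton_self _, rfl⟩
  | succ n ih => exact BR.spanOf_coOf_mul_le hcomm ih

lemma unit_mem_upper (n : ℕ) : BR.unit ∈ BR.upper n := by
  induction n with
  | zero => exact Finset.mem_univ _
  | succ n ih =>
    refine BR.mem_adOf_of_contains ih ?_
    rw [contains, BR.repr_mul_star_unit]
    exact one_pos

lemma upper_add_subset_unit_iff (hcomm : ∀ x y : R, x * y = y * x) (a b : ℕ) :
    BR.upper (a + b) ⊆ {BR.unit} ↔ BR.upper a ⊆ BR.lower b := by
  induction b generalizing a with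
  | zero => rfl
  | succ b ih =>
    rw [show a + (b + 1) = a + 1 + b by omega, ih (a + 1)]
    exact BR.adOf_subset_iff_subset_coOf (BR.spanOf_lower_mul_le hcomm b)

end BasedRing

/-- Let `R` be a commutative based ring with upper central series
`R = R^(0) ⊇ R^(1) ⊇ ⋯` (iterated adjoint subrings) and lower central series
`ℤ1 = R_(0) ⊆ R_(1) ⊆ ⋯` (iterated commutators). Then for every `n ≥ 0`:
`R^(n) = ℤ1` if and only if `R_(n) = R`, and when this is the case,
`R^(k) ⊆ R_(n-k)` for all `0 ≤ k ≤ n`. -/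
theorem upper_eq_one_iff_lower_eq_top {ι R : Type*} [Fintype ι] [DecidableEq ι]
    [Ring R] (BR : BasedRing ι R) (hcomm : ∀ x y : R, x * y = y * x) :
    ∀ n : ℕ,
      (BR.upper n = {BR.unit} ↔ BR.lower n = Finset.univ) ∧
      (BR.upper n = {BR.unit} → ∀ k ≤ n, BR.upper k ⊆ BR.lower (n - k)) := by
  intro n
  have hsubset : BR.upper n ⊆ {BR.unit} ↔ BR.upper n = {BR.unit} :=
    Finset.Nonempty.subset_singleton_iff ⟨BR.unit, BR.unit_mem_upper n⟩
  constructor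
  · calc BR.upper n = {BR.unit} ↔ BR.upper (0 + n) ⊆ {BR.unit} := by rw [zero_add, hsubset]
      _ ↔ Finset.univ ⊆ BR.lower n := BR.upper_add_subset_unit_iff hcomm 0 n
      _ ↔ BR.lower n = Finset.univ := Finset.univ_subset_iff
  · intro h k hk
    rw [← BR.upper_add_subset_unit_iff hcomm, Nat.add_sub_cancel' hk]
    exact hsubset.2 h
end
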